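/- arXiv:nlin/0510064 — 7 statements merged into one kernel-verified Lean document; each statement's English description precedes it below -/
import Mathlib

section
/- Exactness is necessary for the vanishing of the Euler operator: for every F ∈ R = MvPolynomial ℕ ℝ, the Euler operator annihilates total derivatives, i.e., L⁰ (D_x F) = 0. -/
open MvPolynomial

/-- The total derivative operator `D_x f = Σᵢ X_{i+1} · ∂f/∂Xᵢ` on
`R = ℝ[X₀, X₁, X₂, …]`, where `Xᵢ` represents the `i`-th derivative `u_{ix}`. -/
noncomputable def Dx (f : MvPolynomial ℕ ℝ) : MvPolynomial ℕ ℝ :=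
  ∑ i ∈ f.vars, X (i + 1) * pderiv i f

/-- The continuous Euler operator (variational derivative)
`L⁰ f = Σ_{k≥0} (−D_x)^k (∂f/∂X_k)`; the sum is finite, so it suffices to sum
over the variables occurring in `f`. -/
noncomputable def Euler (f : MvPolynomial ℕ ℝ) : MvPolynomial ℕ ℝ :=
  ∑ k ∈ f.vars, ((fun g => -Dx g)^[k]) (pderiv k f)

lemma Dx_eq_sum_range {f : MvPolynomial ℕ ℝ} {n : ℕ} (h : f.vars ⊆ Finset.range n) :
    Dx f = ∑ i ∈ Finset.range n, X (i + 1) * pderiv i f := by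
  rw [Dx]
  refine Finset.sum_subset h fun i _ hi => ?_
  rw [pderiv_eq_zero_of_notMem_vars hi, mul_zero]

lemma Dx_zero : Dx 0 = 0 := by simp [Dx]

lemma vars_pderiv_subset (j : ℕ) (f : MvPolynomial ℕ ℝ) :
    (pderiv j f).vars ⊆ f.vars := by
  conv_lhs => rw [f.as_sum]
  rw [map_sum]
  refine (vars_sum_subset _ _).trans ?_
  intro i hi
  rw [Finset.mem_biUnion] at hi
  obtain ⟨d, hd, hi⟩ := hi
  rw [pderiv_monomial] at hi
  by_cases hz : (coeff d f * (d j : ℝ)) = 0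
  · rw [hz, monomial_zero] at hi
    simp at hi
  · rw [vars_monomial hz, Finsupp.mem_support_iff] at hi
    rw [mem_vars]
    refine ⟨d, hd, Finsupp.mem_support_iff.mpr fun h0 => hi ?_⟩
    rw [Finsupp.tsub_apply, h0]
    simp

lemma pderiv_comm' (i j : ℕ) (f : MvPolynomial ℕ ℝ) :
    pderiv i (pderiv j f) = pderiv j (pderiv i f) := by
  induction f using MvPolynomial.induction_on' with
  | add p q hp hq => simp [hp, hq]
  | monomial s a =>
    rcases eq_or_ne i j with rfl | hij
    · rfl
    · simp only [pderiv_monomial]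
      rw [tsub_right_comm]
      congr 1
      rw [Finsupp.tsub_apply, Finsupp.tsub_apply,
        Finsupp.single_eq_of_ne hij, Finsupp.single_eq_of_ne (Ne.symm hij)]
      push_cast [Nat.sub_zero]
      ring

lemma Dx_add (f g : MvPolynomial ℕ ℝ) : Dx (f + g) = Dx f + Dx g := by
  obtain ⟨n, hn⟩ := (f.vars ∪ g.vars ∪ (f + g).vars).exists_nat_subset_range
  rw [Dx_eq_sum_range (f := f + g) (n := n)
      (fun i hi => hn (Finset.mem_union_right _ hi)),
    Dx_eq_sum_range (f := f) (n := n)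
      (fun i hi => hn (Finset.mem_union_left _ (Finset.mem_union_left _ hi))),
    Dx_eq_sum_range (f := g) (n := n)
      (fun i hi => hn (Finset.mem_union_left _ (Finset.mem_union_right _ hi))),
    ← Finset.sum_add_distrib]
  exact Finset.sum_congr rfl fun i _ => by rw [map_add, mul_add]

lemma Dx_neg (f : MvPolynomial ℕ ℝ) : Dx (-f) = -Dx f := by
  have h := Dx_add f (-f)
  rw [add_neg_cancel, Dx_zero] at h
  exact eq_neg_of_add_eq_zero_right h.symm

lemma T_iter_zero (k : ℕ) : ((fun g : MvPolynomial ℕ ℝ => -Dx g)^[k]) 0 = 0 := by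
  induction k with
  | zero => rfl
  | succ k ih => rw [Function.iterate_succ_apply]; simpa [Dx_zero] using ih

lemma T_iter_add (k : ℕ) (a b : MvPolynomial ℕ ℝ) :
    ((fun g : MvPolynomial ℕ ℝ => -Dx g)^[k]) (a + b)
      = ((fun g => -Dx g)^[k]) a + ((fun g => -Dx g)^[k]) b := by
  induction k generalizing a b with
  | zero => rfl
  | succ k ih =>
    rw [Function.iterate_succ_apply, Function.iterate_succ_apply,
      Function.iterate_succ_apply]
    show ((fun g => -Dx g)^[k]) (-Dx (a + b)) = _
    rw [Dx_add, neg_add, ih]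

lemma T_iter_neg (k : ℕ) (a : MvPolynomial ℕ ℝ) :
    ((fun g : MvPolynomial ℕ ℝ => -Dx g)^[k]) (-a)
      = -((fun g => -Dx g)^[k]) a := by
  induction k generalizing a with
  | zero => rfl
  | succ k ih =>
    rw [Function.iterate_succ_apply, Function.iterate_succ_apply]
    show ((fun g => -Dx g)^[k]) (-Dx (-a)) = _
    rw [Dx_neg, neg_neg]
    show _ = -((fun g => -Dx g)^[k]) (-Dx a)
    rw [← ih]
    congr 1
    exact (neg_neg _).symm

lemma Euler_eq_sum_range {f : MvPolynomial ℕ ℝ} {n : ℕ} (h : f.vars ⊆ Finset.range n) :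
    Euler f = ∑ k ∈ Finset.range n, ((fun g => -Dx g)^[k]) (pderiv k f) := by
  rw [Euler]
  refine Finset.sum_subset h fun k _ hk => ?_
  rw [pderiv_eq_zero_of_notMem_vars hk, T_iter_zero]

lemma pderiv_zero_Dx {F : MvPolynomial ℕ ℝ} {n : ℕ} (hn : F.vars ⊆ Finset.range n) :
    pderiv 0 (Dx F) = Dx (pderiv 0 F) := by
  rw [Dx_eq_sum_range hn, map_sum,
    Dx_eq_sum_range (f := pderiv 0 F) ((vars_pderiv_subset _ _).trans hn)]
  refine Finset.sum_congr rfl fun i _ => ?_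
  rw [pderiv_mul, pderiv_X_of_ne (Nat.succ_ne_zero i), zero_mul, zero_add,
    pderiv_comm' 0 i]

lemma pderiv_succ_Dx {F : MvPolynomial ℕ ℝ} {n : ℕ} (hn : F.vars ⊆ Finset.range n)
    (j : ℕ) :
    pderiv (j + 1) (Dx F) = Dx (pderiv (j + 1) F) + pderiv j F := by
  rw [Dx_eq_sum_range hn, map_sum,
    Dx_eq_sum_range (f := pderiv (j + 1) F) ((vars_pderiv_subset _ _).trans hn)]
  have key : ∀ i ∈ Finset.range n,
      pderiv (j + 1) (X (i + 1) * pderiv i F)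
        = X (i + 1) * pderiv i (pderiv (j + 1) F)
          + (if i = j then pderiv j F else 0) := by
    intro i _
    rw [pderiv_mul, pderiv_comm' (j + 1) i]
    rcases eq_or_ne i j with rfl | hij
    · rw [if_pos rfl, pderiv_X_self, one_mul, add_comm]
    · rw [if_neg hij, pderiv_X_of_ne (by omega), zero_mul, zero_add, add_zero]
  rw [Finset.sum_congr rfl key, Finset.sum_add_distrib, Finset.sum_ite_eq' _ j]
  by_cases hj : j ∈ Finset.range n
  · rw [if_pos hj]
  · rw [if_neg hj,
      pderiv_eq_zero_of_notMem_vars (fun h => hj (hn h)), add_zero]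

/-- The Euler operator annihilates total derivatives. -/
theorem euler_annihilates_Dx (F : MvPolynomial ℕ ℝ) :
    Euler (Dx F) = 0 := by
  obtain ⟨n, hn⟩ := F.vars.exists_nat_subset_range
  have hDx : (Dx F).vars ⊆ Finset.range (n + 1) := by
    rw [Dx]
    refine (vars_sum_subset _ _).trans ?_
    intro i hi
    rw [Finset.mem_biUnion] at hi
    obtain ⟨d, hd, hi⟩ := hi
    have := vars_mul (X (d + 1)) (pderiv d F) hi
    rw [Finset.mem_union] at this
    rcases this with h | h
    · rw [vars_X] at h
      rw [Finset.mem_singleton] at h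
      subst h
      have := hn hd
      rw [Finset.mem_range] at this ⊢
      omega
    · have := hn (vars_pderiv_subset d F h)
      rw [Finset.mem_range] at this ⊢
      omega
  rw [Euler_eq_sum_range hDx, Finset.sum_range_succ']
  have h0 : ((fun g => -Dx g)^[0]) (pderiv 0 (Dx F)) = Dx (pderiv 0 F) := by
    rw [Function.iterate_zero_apply, pderiv_zero_Dx hn]
  have hsucc : ∀ j ∈ Finset.range n,
      ((fun g => -Dx g)^[j + 1]) (pderiv (j + 1) (Dx F))
        = ((fun g => -Dx g)^[j + 1]) (Dx (pderiv (j + 1) F))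
          - ((fun g => -Dx g)^[j]) (Dx (pderiv j F)) := by
    intro j _
    rw [pderiv_succ_Dx hn j, T_iter_add, sub_eq_add_neg]
    congr 1
    rw [Function.iterate_succ_apply]
    show ((fun g => -Dx g)^[j]) (-Dx (pderiv j F)) = _
    rw [T_iter_neg]
  rw [h0, Finset.sum_congr rfl hsucc, Finset.sum_range_sub
    (f := fun j => ((fun g => -Dx g)^[j]) (Dx (pderiv j F)))]
  have hz : pderiv n F = 0 :=
    pderiv_eq_zero_of_notMem_vars (fun h => by simpa using hn h)
  rw [hz, Dx_zero, T_iter_zero, Function.iterate_zero_apply]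
  ring
end

section
/- Vanishing of the Euler operator is sufficient for exactness: if f ∈ R = MvPolynomial ℕ ℝ has zero constant term and L⁰ f = 0, then there exists F ∈ R with f = D_x F. -/
open MvPolynomial

namespace EulerAux

lemma Dx_eq_sum (f : MvPolynomial ℕ ℝ) {s : Finset ℕ} (hs : f.vars ⊆ s) :
    Dx f = ∑ i ∈ s, X (i + 1) * pderiv i f :=
  Finset.sum_subset hs fun i _ hi => by
    rw [pderiv_eq_zero_of_notMem_vars hi, mul_zero]

lemma Dx_add (f g : MvPolynomial ℕ ℝ) : Dx (f + g) = Dx f + Dx g := by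
  classical
  rw [Dx_eq_sum (f + g) (s := f.vars ∪ g.vars) (vars_add_subset f g),
      Dx_eq_sum f (s := f.vars ∪ g.vars) Finset.subset_union_left,
      Dx_eq_sum g (s := f.vars ∪ g.vars) Finset.subset_union_right,
      ← Finset.sum_add_distrib]
  exact Finset.sum_congr rfl fun i _ => by rw [map_add, mul_add]

lemma Dx_smul (c : ℝ) (f : MvPolynomial ℕ ℝ) : Dx (c • f) = c • Dx f := by
  rw [Dx_eq_sum (c • f) (s := (c • f).vars ∪ f.vars) Finset.subset_union_left,
      Dx_eq_sum f (s := (c • f).vars ∪ f.vars) Finset.subset_union_right,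
      Finset.smul_sum]
  exact Finset.sum_congr rfl fun i _ => by rw [(pderiv i).map_smul, mul_smul_comm]

/-- `Dx` as a linear map. -/
noncomputable def DxL : MvPolynomial ℕ ℝ →ₗ[ℝ] MvPolynomial ℕ ℝ where
  toFun := Dx
  map_add' := Dx_add
  map_smul' := Dx_smul

lemma Dx_zero : Dx (0 : MvPolynomial ℕ ℝ) = 0 := map_zero DxL

lemma Dx_sub (f g : MvPolynomial ℕ ℝ) : Dx (f - g) = Dx f - Dx g := map_sub DxL f g

lemma Dx_neg (f : MvPolynomial ℕ ℝ) : Dx (-f) = -Dx f := map_neg DxL f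

lemma Dx_sum {α : Type*} (s : Finset α) (g : α → MvPolynomial ℕ ℝ) :
    Dx (∑ i ∈ s, g i) = ∑ i ∈ s, Dx (g i) := map_sum DxL g s

lemma Dx_X (j : ℕ) : Dx (X j) = X (j + 1) := by
  rw [Dx, vars_X, Finset.sum_singleton, pderiv_X_self, mul_one]

lemma Dx_mul (f g : MvPolynomial ℕ ℝ) : Dx (f * g) = Dx f * g + f * Dx g := by
  classical
  rw [Dx_eq_sum (f * g) (s := (f * g).vars ∪ (f.vars ∪ g.vars)) Finset.subset_union_left,
      Dx_eq_sum f (s := (f * g).vars ∪ (f.vars ∪ g.vars))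
        (Finset.subset_union_left.trans Finset.subset_union_right),
      Dx_eq_sum g (s := (f * g).vars ∪ (f.vars ∪ g.vars))
        (Finset.subset_union_right.trans Finset.subset_union_right),
      Finset.sum_mul, Finset.mul_sum, ← Finset.sum_add_distrib]
  refine Finset.sum_congr rfl fun i _ => ?_
  rw [pderiv_mul]; ring

/-- Integration by parts. -/
lemma ibp (m : ℕ) (g : MvPolynomial ℕ ℝ) (j : ℕ) :
    ∃ H, X j * (fun g => -Dx g)^[m] g = X (j + m) * g + Dx H := by
  induction m generalizing g with
  | zero => exact ⟨0, by simp [Dx_zero]⟩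
  | succ m ih =>
    obtain ⟨H, hH⟩ := ih (-Dx g)
    refine ⟨H - X (j + m) * g, ?_⟩
    rw [Function.iterate_succ_apply, hH, Dx_sub, Dx_mul, Dx_X,
      show j + (m + 1) = (j + m) + 1 from rfl]
    ring

/-- The "number operator" `N f = Σᵢ Xᵢ · ∂f/∂Xᵢ`. -/
noncomputable def Nop (f : MvPolynomial ℕ ℝ) : MvPolynomial ℕ ℝ :=
  ∑ i ∈ f.vars, X i * pderiv i f

lemma Nop_eq_sum (f : MvPolynomial ℕ ℝ) {s : Finset ℕ} (hs : f.vars ⊆ s) :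
    Nop f = ∑ i ∈ s, X i * pderiv i f :=
  Finset.sum_subset hs fun i _ hi => by
    rw [pderiv_eq_zero_of_notMem_vars hi, mul_zero]

lemma Nop_add (f g : MvPolynomial ℕ ℝ) : Nop (f + g) = Nop f + Nop g := by
  classical
  rw [Nop_eq_sum (f + g) (s := f.vars ∪ g.vars) (vars_add_subset f g),
      Nop_eq_sum f (s := f.vars ∪ g.vars) Finset.subset_union_left,
      Nop_eq_sum g (s := f.vars ∪ g.vars) Finset.subset_union_right,
      ← Finset.sum_add_distrib]
  exact Finset.sum_congr rfl fun i _ => by rw [map_add, mul_add]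

lemma Nop_smul (c : ℝ) (f : MvPolynomial ℕ ℝ) : Nop (c • f) = c • Nop f := by
  rw [Nop_eq_sum (c • f) (s := (c • f).vars ∪ f.vars) Finset.subset_union_left,
      Nop_eq_sum f (s := (c • f).vars ∪ f.vars) Finset.subset_union_right,
      Finset.smul_sum]
  exact Finset.sum_congr rfl fun i _ => by rw [(pderiv i).map_smul, mul_smul_comm]

noncomputable def NopL : MvPolynomial ℕ ℝ →ₗ[ℝ] MvPolynomial ℕ ℝ where
  toFun := Nop
  map_add' := Nop_add
  map_smul' := Nop_smul

lemma Nop_sum {α : Type*} (s : Finset α) (g : α → MvPolynomial ℕ ℝ) :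
    Nop (∑ i ∈ s, g i) = ∑ i ∈ s, Nop (g i) := map_sum NopL g s

/-- From `Euler f = 0` we obtain that `N f` is exact, by integration by parts. -/
lemma Nop_exact (f : MvPolynomial ℕ ℝ) (hE : Euler f = 0) : ∃ G, Nop f = Dx G := by
  choose H hH using fun k => ibp k (pderiv k f) 0
  refine ⟨-∑ k ∈ f.vars, H k, ?_⟩
  have h0 : X 0 * Euler f = Nop f + Dx (∑ k ∈ f.vars, H k) := by
    rw [Euler, Finset.mul_sum, Nop, Dx_sum, ← Finset.sum_add_distrib]
    exact Finset.sum_congr rfl fun k _ => by rw [hH k, Nat.zero_add]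
  rw [hE, mul_zero] at h0
  rw [Dx_neg]
  exact eq_neg_of_add_eq_zero_left h0.symm

lemma vars_monomial_subset (m : ℕ →₀ ℕ) (c : ℝ) : (monomial m c).vars ⊆ m.support := by
  rcases eq_or_ne c 0 with h | h
  · simp [h]
  · rw [vars_monomial h]

lemma X_mul_monomial (i : ℕ) (μ : ℕ →₀ ℕ) (b : ℝ) :
    X i * monomial μ b = monomial (Finsupp.single i 1 + μ) b := by
  rw [show (X i : MvPolynomial ℕ ℝ) = monomial (Finsupp.single i 1) 1 from rfl,
    monomial_mul, one_mul]

lemma single_le_of_mem {m : ℕ →₀ ℕ} {i : ℕ} (hi : i ∈ m.support) :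
    Finsupp.single i 1 ≤ m :=
  Finsupp.single_le_iff.mpr (Nat.one_le_iff_ne_zero.mpr (Finsupp.mem_support_iff.mp hi))

lemma Nop_monomial (m : ℕ →₀ ℕ) (c : ℝ) :
    Nop (monomial m c) = (m.degree : ℝ) • monomial m c := by
  classical
  rw [Nop_eq_sum _ (vars_monomial_subset m c)]
  have key : ∀ i ∈ m.support, X i * pderiv i (monomial m c)
      = monomial m (c * (m i : ℝ)) := by
    intro i hi
    rw [pderiv_monomial, X_mul_monomial, add_tsub_cancel_of_le (single_le_of_mem hi)]
  rw [Finset.sum_congr rfl key, ← map_sum (monomial m), ← Finset.mul_sum, smul_monomial,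
    Finsupp.degree_apply, Nat.cast_sum, smul_eq_mul, mul_comm]

/-- Homogeneity predicate: every monomial of `p` has degree `n`. -/
def Hom (n : ℕ) (p : MvPolynomial ℕ ℝ) : Prop :=
  ∀ m : ℕ →₀ ℕ, coeff m p ≠ 0 → m.degree = n

lemma hom_sum {α : Type*} {n : ℕ} {s : Finset α} {g : α → MvPolynomial ℕ ℝ}
    (h : ∀ i ∈ s, Hom n (g i)) : Hom n (∑ i ∈ s, g i) := by
  intro m hm
  rw [coeff_sum] at hm
  obtain ⟨i, hi, hne⟩ := Finset.exists_ne_zero_of_sum_ne_zero hm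
  exact h i hi m hne

lemma hom_monomial {m : ℕ →₀ ℕ} {n : ℕ} (c : ℝ) (h : m.degree = n) :
    Hom n (monomial m c) := by
  intro d hd
  rw [coeff_monomial] at hd
  rcases eq_or_ne m d with rfl | hne
  · exact h
  · exact absurd (if_neg hne) hd

lemma deg_add (a b : ℕ →₀ ℕ) : (a + b).degree = a.degree + b.degree := by
  simp [Finsupp.degree_eq_weight_one, map_add]

lemma deg_single (i n : ℕ) : (Finsupp.single i n).degree = n := by
  classical
  rcases eq_or_ne n 0 with rfl | h
  · simp [Finsupp.degree]
  · rw [Finsupp.degree_apply, Finsupp.support_single_ne_zero i h, Finset.sum_singleton,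
      Finsupp.single_eq_same]

lemma hom_Dx_monomial (m : ℕ →₀ ℕ) (c : ℝ) : Hom m.degree (Dx (monomial m c)) := by
  rw [Dx_eq_sum _ (vars_monomial_subset m c)]
  apply hom_sum
  intro i hi
  rw [pderiv_monomial, X_mul_monomial]
  apply hom_monomial
  have hle := single_le_of_mem hi
  conv_rhs => rw [← add_tsub_cancel_of_le hle]
  rw [deg_add, deg_add, deg_single, deg_single]

/-- The scaling operator `Φ` that divides each monomial by its degree. -/
noncomputable def Phi (f : MvPolynomial ℕ ℝ) : MvPolynomial ℕ ℝ :=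
  ∑ m ∈ f.support, (m.degree : ℝ)⁻¹ • monomial m (coeff m f)

lemma Phi_eq_sum (f : MvPolynomial ℕ ℝ) {s : Finset (ℕ →₀ ℕ)} (hs : f.support ⊆ s) :
    Phi f = ∑ m ∈ s, (m.degree : ℝ)⁻¹ • monomial m (coeff m f) :=
  Finset.sum_subset hs fun m _ hm => by
    rw [notMem_support_iff.mp hm, map_zero, smul_zero]

lemma Phi_add (f g : MvPolynomial ℕ ℝ) : Phi (f + g) = Phi f + Phi g := by
  classical
  rw [Phi_eq_sum (f + g) (s := f.support ∪ g.support) support_add,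
      Phi_eq_sum f (s := f.support ∪ g.support) Finset.subset_union_left,
      Phi_eq_sum g (s := f.support ∪ g.support) Finset.subset_union_right,
      ← Finset.sum_add_distrib]
  exact Finset.sum_congr rfl fun m _ => by rw [coeff_add, map_add, smul_add]

lemma Phi_smul (c : ℝ) (f : MvPolynomial ℕ ℝ) : Phi (c • f) = c • Phi f := by
  rw [Phi_eq_sum (c • f) (s := f.support) support_smul, Phi, Finset.smul_sum]
  refine Finset.sum_congr rfl fun m _ => ?_
  rw [coeff_smul, smul_eq_mul, ← smul_eq_mul, map_smul, smul_comm]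

noncomputable def PhiL : MvPolynomial ℕ ℝ →ₗ[ℝ] MvPolynomial ℕ ℝ where
  toFun := Phi
  map_add' := Phi_add
  map_smul' := Phi_smul

lemma Phi_sum {α : Type*} (s : Finset α) (g : α → MvPolynomial ℕ ℝ) :
    Phi (∑ i ∈ s, g i) = ∑ i ∈ s, Phi (g i) := map_sum PhiL g s

lemma Phi_monomial (m : ℕ →₀ ℕ) (c : ℝ) :
    Phi (monomial m c) = (m.degree : ℝ)⁻¹ • monomial m c := by
  classical
  rw [Phi_eq_sum _ (support_monomial_subset), Finset.sum_singleton, coeff_monomial, if_pos rfl]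

lemma Phi_of_hom {n : ℕ} {p : MvPolynomial ℕ ℝ} (h : Hom n p) :
    Phi p = (n : ℝ)⁻¹ • p := by
  conv_rhs => rw [as_sum p]
  rw [Phi, Finset.smul_sum]
  refine Finset.sum_congr rfl fun m hm => ?_
  rw [h m (mem_support_iff.mp hm)]

lemma Phi_Dx (g : MvPolynomial ℕ ℝ) : Phi (Dx g) = Dx (Phi g) := by
  conv_lhs => rw [as_sum g]
  conv_rhs => rw [as_sum g]
  rw [Dx_sum, Phi_sum, Phi_sum, Dx_sum]
  refine Finset.sum_congr rfl fun m _ => ?_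
  rw [Phi_of_hom (hom_Dx_monomial m (coeff m g)), Phi_monomial, Dx_smul]

lemma Phi_Nop_monomial (m : ℕ →₀ ℕ) (c : ℝ) :
    Phi (Nop (monomial m c)) = monomial m c - C (constantCoeff (monomial m c)) := by
  rw [Nop_monomial, Phi_smul, Phi_monomial, constantCoeff_monomial]
  rcases eq_or_ne m.degree 0 with h | h
  · have hm : m = 0 := (Finsupp.degree_eq_zero_iff m).mp h
    subst hm
    rw [map_zero, Nat.cast_zero, zero_smul, if_pos rfl, C_apply, sub_self]
  · have hm : m ≠ 0 := fun hh => h (by simp [hh])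
    rw [if_neg hm, map_zero, sub_zero, smul_smul, mul_inv_cancel₀ (Nat.cast_ne_zero.mpr h),
      one_smul]

lemma Phi_Nop (f : MvPolynomial ℕ ℝ) : Phi (Nop f) = f - C (constantCoeff f) := by
  conv_lhs => rw [as_sum f]
  rw [Nop_sum, Phi_sum,
    Finset.sum_congr rfl fun m (_ : m ∈ f.support) => Phi_Nop_monomial m (coeff m f),
    Finset.sum_sub_distrib, ← map_sum (C : ℝ →+* MvPolynomial ℕ ℝ),
    ← map_sum (constantCoeff : MvPolynomial ℕ ℝ →+* ℝ), support_sum_monomial_coeff]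

end EulerAux

open EulerAux in
/-- Vanishing of the Euler operator is sufficient for exactness: a polynomial
with zero constant term annihilated by `L⁰` is a total derivative. -/
theorem exact_of_euler_eq_zero (f : MvPolynomial ℕ ℝ)
    (hf : constantCoeff f = 0) (hE : Euler f = 0) :
    ∃ F : MvPolynomial ℕ ℝ, f = Dx F := by
  obtain ⟨G, hG⟩ := Nop_exact f hE
  refine ⟨Phi G, ?_⟩
  have h := Phi_Nop f
  rw [hf, map_zero, sub_zero] at h
  rw [← h, hG, Phi_Dx]
end

section
/- The continuous homotopy operator inverts the total derivative on exact expressions: if f ∈ R = MvPolynomial ℕ ℝ has order at most M, has zero constant term, and satisfies L⁰ f = 0, then f = D_x (N (I f)); that is, F = N (I f) is an explicit polynomial with D_x F = f. -/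
open MvPolynomial

/-- The inverse degree operator `N f = Σ_{d≥1} (1/d) · f_d`, where `f_d` is the
homogeneous component of `f` of total degree `d`. -/
noncomputable def Nop (f : MvPolynomial ℕ ℝ) : MvPolynomial ℕ ℝ :=
  ∑ d ∈ Finset.Icc 1 f.totalDegree, ((d : ℝ)⁻¹) • homogeneousComponent d f

/-- The homotopy integrand
`I f = Σ_{i=0}^{M−1} Xᵢ · Σ_{k=i+1}^{M} (−D_x)^{k−i−1} (∂f/∂X_k)`
for `f` of order at most `M`. -/
noncomputable def integrand (M : ℕ) (f : MvPolynomial ℕ ℝ) : MvPolynomial ℕ ℝ :=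
  ∑ i ∈ Finset.range M,
    X i * ∑ k ∈ Finset.Icc (i + 1) M, ((fun g => -Dx g)^[k - (i + 1)]) (pderiv k f)

/-! ### Basic properties of `Dx` -/

lemma Dx_eq_sum {f : MvPolynomial ℕ ℝ} {S : Finset ℕ} (h : f.vars ⊆ S) :
    Dx f = ∑ i ∈ S, X (i + 1) * pderiv i f :=
  Finset.sum_subset h (fun i _ hi => by
    rw [pderiv_eq_zero_of_notMem_vars hi, mul_zero])

lemma vars_smul' (c : ℝ) (f : MvPolynomial ℕ ℝ) : (c • f).vars ⊆ f.vars := by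
  classical
  rw [smul_eq_C_mul]
  refine (vars_mul _ _).trans ?_
  simp [vars_C]

lemma Dx_smul (c : ℝ) (f : MvPolynomial ℕ ℝ) : Dx (c • f) = c • Dx f := by
  rw [Dx_eq_sum (vars_smul' c f), Dx, Finset.smul_sum]
  refine Finset.sum_congr rfl fun i _ => ?_
  rw [(pderiv i).map_smul, mul_smul_comm]

/-- `Dx` as an `ℝ`-linear map. -/
noncomputable def DxL : MvPolynomial ℕ ℝ →ₗ[ℝ] MvPolynomial ℕ ℝ where
  toFun := Dx
  map_add' := Dx_add
  map_smul' := Dx_smul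

lemma Dx_sum {ι : Type*} (s : Finset ι) (g : ι → MvPolynomial ℕ ℝ) :
    Dx (∑ i ∈ s, g i) = ∑ i ∈ s, Dx (g i) := map_sum DxL g s

lemma Dx_mul (p q : MvPolynomial ℕ ℝ) : Dx (p * q) = Dx p * q + p * Dx q := by
  classical
  rw [Dx_eq_sum (S := p.vars ∪ q.vars) (vars_mul p q),
    Dx_eq_sum (S := p.vars ∪ q.vars) Finset.subset_union_left,
    Dx_eq_sum (S := p.vars ∪ q.vars) Finset.subset_union_right,
    Finset.sum_mul, Finset.mul_sum, ← Finset.sum_add_distrib]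
  refine Finset.sum_congr rfl fun i _ => ?_
  rw [pderiv_mul]; ring

lemma Dx_X (i : ℕ) : Dx (X i) = X (i + 1) := by
  rw [Dx, vars_X, Finset.sum_singleton, pderiv_X_self, mul_one]

/-! ### `Dx` preserves homogeneity -/

lemma deg_add (a b : ℕ →₀ ℕ) : (a + b).degree = a.degree + b.degree := by
  simp [Finsupp.degree_eq_weight_one, map_add]

lemma deg_single (i : ℕ) : (Finsupp.single i 1 : ℕ →₀ ℕ).degree = 1 := by
  rw [Finsupp.degree_apply, Finsupp.support_single_ne_zero _ one_ne_zero,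
    Finset.sum_singleton, Finsupp.single_eq_same]

lemma sub_single_add (d : ℕ →₀ ℕ) {i : ℕ} (hi : i ∈ d.support) :
    d - Finsupp.single i 1 + Finsupp.single i 1 = d :=
  tsub_add_cancel_of_le (Finsupp.single_le_iff.mpr
    (Nat.one_le_iff_ne_zero.mpr (Finsupp.mem_support_iff.mp hi)))

lemma Dx_monomial_isHomogeneous (d : ℕ →₀ ℕ) (r : ℝ) :
    (Dx (monomial d r)).IsHomogeneous d.degree := by
  rw [Dx_eq_sum (le_refl _)]
  refine IsHomogeneous.sum _ _ _ fun i hi => ?_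
  by_cases hr : r = 0
  · simp only [hr, map_zero, mul_zero]
    exact isHomogeneous_zero _ _ _
  rw [vars_monomial hr] at hi
  rw [pderiv_monomial, X, monomial_mul, one_mul]
  refine isHomogeneous_monomial _ ?_
  rw [deg_add, deg_single, add_comm]
  conv_rhs => rw [← sub_single_add d hi]
  rw [deg_add, deg_single]

lemma Dx_isHomogeneous {p : MvPolynomial ℕ ℝ} {n : ℕ}
    (hp : p.IsHomogeneous n) : (Dx p).IsHomogeneous n := by
  have h1 : Dx p = ∑ d ∈ p.support, Dx (monomial d (coeff d p)) := by
    conv_lhs => rw [p.as_sum]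
    exact Dx_sum _ _
  rw [h1]
  refine IsHomogeneous.sum _ _ _ fun d hd => ?_
  have : d.degree = n := by
    by_contra h
    exact (mem_support_iff.mp hd) (hp.coeff_eq_zero h)
  exact this ▸ Dx_monomial_isHomogeneous d _

lemma homogeneousComponent_Dx (n : ℕ) (p : MvPolynomial ℕ ℝ) :
    homogeneousComponent n (Dx p) = Dx (homogeneousComponent n p) := by
  have h1 : Dx p = ∑ e ∈ Finset.range (p.totalDegree + 1),
      Dx (homogeneousComponent e p) := by
    conv_lhs => rw [← p.sum_homogeneousComponent]
    exact Dx_sum _ _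
  rw [h1, map_sum]
  have h2 : ∀ e ∈ Finset.range (p.totalDegree + 1),
      homogeneousComponent n (Dx (homogeneousComponent e p)) =
        if n = e then Dx (homogeneousComponent e p) else 0 := fun e _ =>
    homogeneousComponent_of_mem ((mem_homogeneousSubmodule _ _).mpr
      (Dx_isHomogeneous (homogeneousComponent_isHomogeneous e p)))
  rw [Finset.sum_congr rfl h2, Finset.sum_ite_eq]
  split_ifs with h
  · rfl
  · rw [homogeneousComponent_eq_zero, Dx_zero]
    simpa using h

/-! ### The Euler identity -/

lemma euler_monomial (d : ℕ →₀ ℕ) (r : ℝ) {S : Finset ℕ} (hS : d.support ⊆ S) :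
    ∑ i ∈ S, X i * pderiv i (monomial d r) = d.degree • monomial d r := by
  classical
  rw [← Finset.sum_subset hS (fun i _ hi =>
    by simp [pderiv_monomial, Finsupp.notMem_support_iff.mp hi])]
  have h1 : ∀ i ∈ d.support,
      X i * pderiv i (monomial d r) = monomial d (r * (d i : ℝ)) := by
    intro i hi
    rw [pderiv_monomial, X, monomial_mul, one_mul, add_comm, sub_single_add d hi]
  have h3 : (∑ i ∈ d.support, r * (d i : ℝ)) = (d.degree : ℝ) * r := by
    rw [← Finset.mul_sum, Finsupp.degree_apply, Nat.cast_sum, mul_comm]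
  rw [Finset.sum_congr rfl h1, ← map_sum (monomial d), h3, nsmul_eq_mul,
    show ((d.degree : ℕ) : MvPolynomial ℕ ℝ) = C ((d.degree : ℕ) : ℝ) by simp,
    C_mul_monomial]

lemma support_degree_subset_vars {p : MvPolynomial ℕ ℝ} {d : ℕ →₀ ℕ}
    (hd : d ∈ p.support) : d.support ⊆ p.vars :=
  fun i hi => (mem_vars i).mpr ⟨d, hd, hi⟩

lemma euler_homog {p : MvPolynomial ℕ ℝ} {n : ℕ} (hp : IsHomogeneous p n)
    {S : Finset ℕ} (hS : p.vars ⊆ S) :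
    ∑ i ∈ S, X i * pderiv i p = n • p := by
  have key : ∀ i ∈ S, X i * pderiv i p
      = ∑ d ∈ p.support, X i * pderiv i (monomial d (coeff d p)) := by
    intro i _
    conv_lhs => rw [p.as_sum]
    rw [map_sum, Finset.mul_sum]
  rw [Finset.sum_congr rfl key, Finset.sum_comm]
  have h2 : ∀ d ∈ p.support, ∑ i ∈ S, X i * pderiv i (monomial d (coeff d p))
      = n • monomial d (coeff d p) := by
    intro d hd
    rw [euler_monomial d _ ((support_degree_subset_vars hd).trans hS)]
    congr 1
    by_contra h
    exact (mem_support_iff.mp hd) (hp.coeff_eq_zero h)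
  rw [Finset.sum_congr rfl h2, ← Finset.smul_sum, ← p.as_sum]

/-! ### Properties of `Nop` -/

lemma vars_homogeneousComponent' (n : ℕ) (p : MvPolynomial ℕ ℝ) :
    (homogeneousComponent n p).vars ⊆ p.vars := by
  intro i hi
  rw [mem_vars] at hi ⊢
  obtain ⟨d, hd, hid⟩ := hi
  refine ⟨d, ?_, hid⟩
  rw [mem_support_iff] at hd ⊢
  intro h
  apply hd
  rw [coeff_homogeneousComponent]
  split_ifs <;> simp [h]

lemma E_eq {f : MvPolynomial ℕ ℝ} {S : Finset ℕ} (hS : f.vars ⊆ S) :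
    ∑ i ∈ S, X i * pderiv i f
      = ∑ d ∈ Finset.range (f.totalDegree + 1), d • homogeneousComponent d f := by
  have key : ∀ i ∈ S, X i * pderiv i f = ∑ d ∈ Finset.range (f.totalDegree + 1),
      X i * pderiv i (homogeneousComponent d f) := by
    intro i _
    conv_lhs => rw [← f.sum_homogeneousComponent]
    rw [map_sum, Finset.mul_sum]
  rw [Finset.sum_congr rfl key, Finset.sum_comm]
  exact Finset.sum_congr rfl fun d _ => euler_homog
    (homogeneousComponent_isHomogeneous d f)
    ((vars_homogeneousComponent' d f).trans hS)

lemma Nop_eq {h : MvPolynomial ℕ ℝ} {T : ℕ} (hT : h.totalDegree ≤ T) :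
    Nop h = ∑ d ∈ Finset.Icc 1 T, ((d : ℝ)⁻¹) • homogeneousComponent d h := by
  refine Finset.sum_subset (Finset.Icc_subset_Icc_right hT) fun d hd hd' => ?_
  rw [homogeneousComponent_eq_zero, smul_zero]
  rw [Finset.mem_Icc] at hd hd'
  omega

lemma Dx_Nop (h : MvPolynomial ℕ ℝ) : Dx (Nop h) = Nop (Dx h) := by
  rw [Nop_eq (le_max_left h.totalDegree (Dx h).totalDegree),
    Nop_eq (le_max_right h.totalDegree (Dx h).totalDegree), Dx_sum]
  refine Finset.sum_congr rfl fun d _ => ?_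
  rw [Dx_smul, homogeneousComponent_Dx]

lemma Nop_degree_sum (f : MvPolynomial ℕ ℝ) (hf : constantCoeff f = 0) :
    Nop (∑ d ∈ Finset.range (f.totalDegree + 1), d • homogeneousComponent d f)
      = f := by
  set T := f.totalDegree with hT
  set g := ∑ d ∈ Finset.range (T + 1), d • homogeneousComponent d f with hg
  have hgT : g.totalDegree ≤ T := by
    refine (totalDegree_finset_sum _ _).trans (Finset.sup_le fun d hd => ?_)
    refine (totalDegree_smul_le _ _).trans ?_
    refine (homogeneousComponent_isHomogeneous d f).totalDegree_le.trans ?_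
    exact Nat.lt_succ_iff.mp (Finset.mem_range.mp hd)
  have hcomp : ∀ e ∈ Finset.Icc 1 T,
      homogeneousComponent e g = e • homogeneousComponent e f := by
    intro e he
    rw [Finset.mem_Icc] at he
    rw [hg, map_sum]
    have h1 : ∀ d ∈ Finset.range (T + 1),
        homogeneousComponent e (d • homogeneousComponent d f)
          = if e = d then d • homogeneousComponent d f else 0 := by
      intro d _
      refine homogeneousComponent_of_mem ?_
      rw [← Nat.cast_smul_eq_nsmul ℝ]
      exact Submodule.smul_mem _ _ ((mem_homogeneousSubmodule _ _).mpr
        (homogeneousComponent_isHomogeneous d f))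
    rw [Finset.sum_congr rfl h1, Finset.sum_ite_eq, if_pos]
    exact Finset.mem_range.mpr (Nat.lt_succ_iff.mpr he.2)
  rw [Nop_eq hgT, Finset.sum_congr rfl fun e he => by rw [hcomp e he]]
  have h2 : ∀ e ∈ Finset.Icc 1 T,
      ((e : ℝ)⁻¹) • (e • homogeneousComponent e f) = homogeneousComponent e f := by
    intro e he
    rw [Finset.mem_Icc] at he
    rw [← Nat.cast_smul_eq_nsmul ℝ, smul_smul,
      inv_mul_cancel₀ (by exact_mod_cast Nat.one_le_iff_ne_zero.mp he.1), one_smul]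
  rw [Finset.sum_congr rfl h2]
  have h3 : Finset.range (T + 1) = insert 0 (Finset.Icc 1 T) := by
    ext x
    simp only [Finset.mem_range, Finset.mem_insert, Finset.mem_Icc, Nat.lt_succ_iff]
    omega
  have h4 := f.sum_homogeneousComponent
  rw [← hT, h3, Finset.sum_insert (by simp)] at h4
  have h5 : (homogeneousComponent 0) f = 0 := by
    rw [homogeneousComponent_zero, show coeff 0 f = 0 from hf, map_zero]
  rw [h5, zero_add] at h4
  exact h4

/-! ### The telescoping identity for the integrand -/

lemma iterate_neg_Dx_zero (n : ℕ) : (fun g => -Dx g)^[n] 0 = 0 := by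
  induction n with
  | zero => rfl
  | succ n ih => rw [Function.iterate_succ_apply', ih, Dx_zero, neg_zero]

noncomputable def Bop (M : ℕ) (f : MvPolynomial ℕ ℝ) (j : ℕ) : MvPolynomial ℕ ℝ :=
  ∑ k ∈ Finset.Icc j M, ((fun g => -Dx g)^[k - j]) (pderiv k f)

lemma Bop_self (M : ℕ) (f : MvPolynomial ℕ ℝ) : Bop M f M = pderiv M f := by
  rw [Bop, Finset.Icc_self, Finset.sum_singleton, Nat.sub_self,
    Function.iterate_zero_apply]

lemma Dx_Bop_succ (M : ℕ) (f : MvPolynomial ℕ ℝ) (j : ℕ) (hj : j ≤ M) :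
    Dx (Bop M f (j + 1)) = pderiv j f - Bop M f j := by
  have h1 : Bop M f j = pderiv j f - Dx (Bop M f (j + 1)) := by
    rw [Bop, Finset.Icc_eq_cons_Ioc hj, Finset.sum_cons, Nat.sub_self,
      Function.iterate_zero_apply, ← Finset.Icc_add_one_left_eq_Ioc]
    have h2 : ∀ k ∈ Finset.Icc (j + 1) M,
        ((fun g => -Dx g)^[k - j]) (pderiv k f)
          = -Dx (((fun g => -Dx g)^[k - (j + 1)]) (pderiv k f)) := by
      intro k hk
      rw [Finset.mem_Icc] at hk
      rw [show k - j = (k - (j + 1)) + 1 by omega, Function.iterate_succ_apply']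
    rw [Finset.sum_congr rfl h2, Finset.sum_neg_distrib, ← Dx_sum, ← Bop,
      sub_eq_add_neg]
  rw [h1]
  ring

lemma Bop_zero_eq_Euler (M : ℕ) (f : MvPolynomial ℕ ℝ)
    (hM : ∀ i ∈ f.vars, i ≤ M) : Bop M f 0 = Euler f := by
  rw [Bop, Euler]
  refine (Finset.sum_subset
    (fun k hk => Finset.mem_Icc.mpr ⟨Nat.zero_le _, hM k hk⟩) fun k _ hk => ?_).symm
  rw [pderiv_eq_zero_of_notMem_vars hk, iterate_neg_Dx_zero]

lemma Dx_integrand (M : ℕ) (f : MvPolynomial ℕ ℝ) :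
    Dx (integrand M f)
      = ∑ i ∈ Finset.range (M + 1), X i * pderiv i f - X 0 * Bop M f 0 := by
  have h0 : integrand M f = ∑ i ∈ Finset.range M, X i * Bop M f (i + 1) := rfl
  rw [h0, Dx_sum]
  have h1 : ∀ i ∈ Finset.range M, Dx (X i * Bop M f (i + 1))
      = (X (i + 1) * Bop M f (i + 1) - X i * Bop M f i) + X i * pderiv i f := by
    intro i hi
    rw [Dx_mul, Dx_X, Dx_Bop_succ M f i (Nat.le_of_lt (Finset.mem_range.mp hi))]
    ring
  rw [Finset.sum_congr rfl h1, Finset.sum_add_distrib,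
    Finset.sum_range_sub (fun i => X i * Bop M f i), Bop_self,
    Finset.sum_range_succ]
  ring

/-- The continuous homotopy operator inverts the total derivative on exact
expressions: `F = N (I f)` satisfies `D_x F = f`. -/
theorem homotopy_inverts_Dx (M : ℕ) (f : MvPolynomial ℕ ℝ)
    (hM : ∀ i ∈ f.vars, i ≤ M) (hf : constantCoeff f = 0) (hE : Euler f = 0) :
    f = Dx (Nop (integrand M f)) := by
  have hvars : f.vars ⊆ Finset.range (M + 1) := fun i hi =>
    Finset.mem_range.mpr (Nat.lt_succ_iff.mpr (hM i hi))
  rw [Dx_Nop, Dx_integrand, Bop_zero_eq_Euler M f hM, hE, mul_zero, sub_zero,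
    E_eq hvars, Nop_degree_sum f hf]
end

section
/- Binomial coefficient identity: for all natural numbers j and k with k ≥ j + 1, Σ_{i=j}^{k−1} (−1)^{i−j} · (i choose j) · (k choose (i+1)) = 1. -/
lemma aux_alt_sum (j k : ℕ) (h : j < k) :
    ∑ i ∈ Finset.Icc j k, (-1 : ℤ) ^ (i - j) * (i.choose j : ℤ) * (k.choose i : ℤ) = 0 := by
  rw [← Finset.Ico_add_one_right_eq_Icc, Finset.sum_Ico_eq_sum_range]
  have key : ∀ m ∈ Finset.range (k + 1 - j),
      (-1 : ℤ) ^ (j + m - j) * ((j + m).choose j : ℤ) * (k.choose (j + m) : ℤ)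
        = (k.choose j : ℤ) * ((-1 : ℤ) ^ m * ((k - j).choose m : ℤ)) := by
    intro m hm
    simp only [Finset.mem_range] at hm
    have hjm : j + m ≤ k := by omega
    have := Nat.choose_mul (n := k) (Nat.le_add_right j m)
    have hc : (k.choose (j + m)) * ((j + m).choose j) = k.choose j * (k - j).choose (j + m - j) :=
      this
    simp only [Nat.add_sub_cancel_left] at hc ⊢
    have : ((k.choose (j + m)) * ((j + m).choose j) : ℤ) =
        ((k.choose j : ℕ) * (k - j).choose m : ℤ) := by exact_mod_cast congrArg Nat.cast hc
    push_cast at this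
    linear_combination (-1 : ℤ) ^ m * this
  rw [Finset.sum_congr rfl key, ← Finset.mul_sum]
  have hkj : k + 1 - j = (k - j) + 1 := by omega
  rw [hkj, Int.alternating_sum_range_choose_of_ne (by omega), mul_zero]

/-- Binomial coefficient identity: for natural numbers `j, k` with `k ≥ j + 1`,
`Σ_{i=j}^{k−1} (−1)^{i−j} · C(i,j) · C(k,i+1) = 1`. -/
theorem binomial_alternating_sum (j k : ℕ) (h : j + 1 ≤ k) :
    ∑ i ∈ Finset.Icc j (k - 1),
      (-1 : ℤ) ^ (i - j) * (i.choose j : ℤ) * (k.choose (i + 1) : ℤ) = 1 := by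
  induction k, h using Nat.le_induction with
  | base => simp
  | succ k hk ih =>
    have hI : Finset.Icc j (k + 1 - 1) = Finset.Icc j k := by norm_num
    rw [hI]
    have split : ∀ i ∈ Finset.Icc j k,
        (-1 : ℤ) ^ (i - j) * (i.choose j : ℤ) * ((k + 1).choose (i + 1) : ℤ)
          = (-1 : ℤ) ^ (i - j) * (i.choose j : ℤ) * (k.choose i : ℤ)
            + (-1 : ℤ) ^ (i - j) * (i.choose j : ℤ) * (k.choose (i + 1) : ℤ) := by
      intro i _
      rw [Nat.choose_succ_succ']
      push_cast
      ring
    rw [Finset.sum_congr rfl split, Finset.sum_add_distrib,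
      aux_alt_sum j k (by omega), zero_add]
    have hk1 : k = (k - 1) + 1 := by omega
    rw [hk1, Finset.sum_Icc_succ_top (by omega), ← hk1, ih]
    simp [Nat.choose_succ_self]
end

section
/- The discrete Euler operator annihilates total differences: for every F ∈ S = MvPolynomial ℤ ℝ, L⁰ (Δ F) = 0. -/
open MvPolynomial

/-- The shift operator on `S = ℝ[…, X₋₁, X₀, X₁, …]` sending `X_k` to `X_{k+m}`;
`shift 1` is the up-shift operator `D`, and `shift (-k)` is `D^{-k}`. -/
noncomputable def shift (m : ℤ) (f : MvPolynomial ℤ ℝ) : MvPolynomial ℤ ℝ :=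
  rename (fun k : ℤ => k + m) f

/-- The forward difference operator `Δ = D − id`. -/
noncomputable def delta (f : MvPolynomial ℤ ℝ) : MvPolynomial ℤ ℝ :=
  shift 1 f - f

/-- The discrete Euler operator `L⁰ f = Σ_{k∈ℤ} D^{−k} (∂f/∂X_k)`; the sum is
finite, so it suffices to sum over the variables occurring in `f`. -/
noncomputable def dEuler (f : MvPolynomial ℤ ℝ) : MvPolynomial ℤ ℝ :=
  ∑ k ∈ f.vars, shift (-k) (pderiv k f)

lemma shift_sub (m : ℤ) (f g : MvPolynomial ℤ ℝ) :
    shift m (f - g) = shift m f - shift m g := map_sub _ _ _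

lemma shift_shift (a b : ℤ) (f : MvPolynomial ℤ ℝ) :
    shift a (shift b f) = shift (b + a) f := by
  simp [shift, rename_rename, Function.comp, add_assoc]

lemma pderiv_shift_one (k : ℤ) (F : MvPolynomial ℤ ℝ) :
    pderiv k (shift 1 F) = shift 1 (pderiv (k - 1) F) := by
  have h : Function.Injective (fun k : ℤ => k + 1) := fun a b hab => by simpa using hab
  have := pderiv_rename (f := fun k : ℤ => k + 1) h (k - 1) F
  simpa [shift] using this

lemma dEuler_eq_sum {f : MvPolynomial ℤ ℝ} {T : Finset ℤ} (h : f.vars ⊆ T) :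
    dEuler f = ∑ k ∈ T, shift (-k) (pderiv k f) := by
  refine Finset.sum_subset h fun k _ hk => ?_
  rw [pderiv_eq_zero_of_notMem_vars hk]
  exact map_zero _

/-- The discrete Euler operator annihilates total differences. -/
theorem dEuler_annihilates_delta (F : MvPolynomial ℤ ℝ) :
    dEuler (delta F) = 0 := by
  classical
  set h : ℤ → MvPolynomial ℤ ℝ := fun j => shift (-j) (pderiv j F) with hh
  have hzero : ∀ j ∉ F.vars, h j = 0 := fun j hj => by
    simp [hh, pderiv_eq_zero_of_notMem_vars hj, shift]
  have key : ∀ S : Finset ℤ, F.vars ⊆ S → ∑ j ∈ S, h j = ∑ j ∈ F.vars, h j := by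
    intro S hS
    exact (Finset.sum_subset hS fun k _ hk => hzero k hk).symm
  set T : Finset ℤ := (delta F).vars ∪ F.vars ∪ F.vars.image (· + 1) with hT
  have hsub : (delta F).vars ⊆ T := by
    intro x hx; simp [hT, hx]
  rw [dEuler_eq_sum hsub]
  have step : ∀ k : ℤ, shift (-k) (pderiv k (delta F)) = h (k - 1) - h k := by
    intro k
    rw [delta, map_sub, shift_sub, pderiv_shift_one, shift_shift]
    have e : (1:ℤ) + -k = -(k-1) := by ring
    rw [e]
  simp only [step, Finset.sum_sub_distrib]
  have e1 : ∑ k ∈ T, h (k - 1) = ∑ j ∈ T.image (· - 1), h j := by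
    rw [Finset.sum_image (fun a _ b _ hab => by omega)]
  have hsub1 : F.vars ⊆ T.image (· - 1) := by
    intro x hx
    refine Finset.mem_image.mpr ⟨x + 1, ?_, by omega⟩
    exact Finset.mem_union_right _ (Finset.mem_image.mpr ⟨x, hx, rfl⟩)
  have hsub2 : F.vars ⊆ T := fun x hx => by simp [hT, hx]
  rw [e1, key _ hsub1, key _ hsub2, sub_self]
end

section
/- Discrete exactness criterion (multicomponent): let f ∈ S_N = MvPolynomial (Fin N × ℤ) ℝ have zero constant term and involve only variables X_{(j,k)} with k ≥ 0 (only nonnegative shifts). Then f is a total difference, i.e., there exists F ∈ S_N with f = Δ F, if and only if L⁰_j f = 0 for every j ∈ Fin N. -/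
open MvPolynomial

/-- The shift operator on `S_N = ℝ[X_{(j,k)} : j ∈ Fin N, k ∈ ℤ]` sending
`X_{(j,k)}` to `X_{(j,k+m)}`; `shiftN 1` is the up-shift operator `D`, and
`shiftN (-k)` is `D^{-k}`. -/
noncomputable def shiftN {N : ℕ} (m : ℤ) (f : MvPolynomial (Fin N × ℤ) ℝ) :
    MvPolynomial (Fin N × ℤ) ℝ :=
  rename (fun p : Fin N × ℤ => (p.1, p.2 + m)) f

/-- The forward difference operator `Δ = D − id`. -/
noncomputable def deltaN {N : ℕ} (f : MvPolynomial (Fin N × ℤ) ℝ) :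
    MvPolynomial (Fin N × ℤ) ℝ :=
  shiftN 1 f - f

/-- The discrete Euler operator for component `j`:
`L⁰_j f = Σ_{k∈ℤ} D^{−k} (∂f/∂X_{(j,k)})`; the sum is finite, so it suffices
to sum over the shifts occurring among the variables of `f`. -/
noncomputable def dEulerN {N : ℕ} (j : Fin N) (f : MvPolynomial (Fin N × ℤ) ℝ) :
    MvPolynomial (Fin N × ℤ) ℝ :=
  ∑ k ∈ f.vars.image Prod.snd, shiftN (-k) (pderiv (j, k) f)

namespace DiscreteExactAux

variable {N : ℕ}

/-- coefficient formula for `pderiv`. -/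
lemma coeff_pderiv (i : Fin N × ℤ) (m : (Fin N × ℤ) →₀ ℕ)
    (f : MvPolynomial (Fin N × ℤ) ℝ) :
    coeff m (pderiv i f) = (m i + 1) * coeff (m + Finsupp.single i 1) f := by
  induction f using MvPolynomial.induction_on' with
  | monomial s a =>
    rw [pderiv_monomial, coeff_monomial, coeff_monomial]
    by_cases h : s = m + Finsupp.single i 1
    · subst h
      rw [if_pos (by rw [add_tsub_cancel_right]), if_pos rfl, Finsupp.add_apply,
        Finsupp.single_eq_same]
      push_cast; ring
    · rw [if_neg h]
      by_cases hsi : s i = 0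
      · simp [hsi]
      · rw [if_neg, mul_zero]
        intro hc
        apply h
        rw [← hc, tsub_add_cancel_of_le]
        rw [Finsupp.single_le_iff]
        omega
  | add p q hp hq =>
    simp only [map_add, coeff_add, hp, hq]; ring

lemma pderiv_eq_zero_of_not_mem_vars {i : Fin N × ℤ}
    {f : MvPolynomial (Fin N × ℤ) ℝ} (h : i ∉ f.vars) : pderiv i f = 0 := by
  ext m
  rw [coeff_pderiv, coeff_zero]
  have : coeff (m + Finsupp.single i 1) f = 0 := by
    by_contra hc
    apply h
    rw [mem_vars]
    refine ⟨m + Finsupp.single i 1, by rwa [MvPolynomial.mem_support_iff], ?_⟩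
    rw [Finsupp.mem_support_iff]
    simp [Finsupp.add_apply, Finsupp.single_eq_same]
  rw [this, mul_zero]

lemma vars_pderiv_subset (i : Fin N × ℤ) (f : MvPolynomial (Fin N × ℤ) ℝ) :
    (pderiv i f).vars ⊆ f.vars := by
  intro p hp
  rw [mem_vars] at hp ⊢
  obtain ⟨m, hm, hpm⟩ := hp
  refine ⟨m + Finsupp.single i 1, ?_, ?_⟩
  · rw [MvPolynomial.mem_support_iff] at hm ⊢
    rw [coeff_pderiv] at hm
    intro hc
    rw [hc, mul_zero] at hm
    exact hm rfl
  · rw [Finsupp.mem_support_iff] at hpm ⊢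
    simp only [Finsupp.add_apply]
    omega

lemma shiftN_inj (m : ℤ) :
    Function.Injective (fun p : Fin N × ℤ => (p.1, p.2 + m)) := by
  intro a b h
  simp only [Prod.mk.injEq] at h
  exact Prod.ext h.1 (by omega)

lemma shiftN_shiftN (m m' : ℤ) (f : MvPolynomial (Fin N × ℤ) ℝ) :
    shiftN m (shiftN m' f) = shiftN (m' + m) f := by
  unfold shiftN
  rw [rename_rename]
  have : ((fun p : Fin N × ℤ => (p.1, p.2 + m)) ∘ fun p : Fin N × ℤ => (p.1, p.2 + m')) =
      fun p : Fin N × ℤ => (p.1, p.2 + (m' + m)) := by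
    funext p; simp [Function.comp, add_assoc]
  rw [this]

lemma shiftN_zero (f : MvPolynomial (Fin N × ℤ) ℝ) : shiftN 0 f = f := by
  unfold shiftN
  have : (fun p : Fin N × ℤ => (p.1, p.2 + 0)) = id := by
    funext p; simp
  rw [this, rename_id, AlgHom.id_apply]

lemma shiftN_sub (m : ℤ) (f g : MvPolynomial (Fin N × ℤ) ℝ) :
    shiftN m (f - g) = shiftN m f - shiftN m g := map_sub (rename _).toRingHom _ _

lemma shiftN_zero' (m : ℤ) : shiftN m (0 : MvPolynomial (Fin N × ℤ) ℝ) = 0 :=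
  map_zero (rename _)

lemma shiftN_add (m : ℤ) (f g : MvPolynomial (Fin N × ℤ) ℝ) :
    shiftN m (f + g) = shiftN m f + shiftN m g := map_add _ _ _

lemma shiftN_neg (m : ℤ) (f : MvPolynomial (Fin N × ℤ) ℝ) :
    shiftN m (-f) = -shiftN m f := map_neg (rename _).toRingHom _

lemma shiftN_sum {α : Type*} (m : ℤ) (s : Finset α)
    (g : α → MvPolynomial (Fin N × ℤ) ℝ) :
    shiftN m (∑ x ∈ s, g x) = ∑ x ∈ s, shiftN m (g x) := map_sum (rename _) _ _

lemma pderiv_shiftN (m : ℤ) (j : Fin N) (k : ℤ) (f : MvPolynomial (Fin N × ℤ) ℝ) :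
    pderiv (j, k + m) (shiftN m f) = shiftN m (pderiv (j, k) f) :=
  pderiv_rename (shiftN_inj m) (j, k) f

/-- Euler sum over an arbitrary finite index set. -/
noncomputable def EE (j : Fin N) (T : Finset ℤ) (f : MvPolynomial (Fin N × ℤ) ℝ) :
    MvPolynomial (Fin N × ℤ) ℝ :=
  ∑ k ∈ T, shiftN (-k) (pderiv (j, k) f)

lemma pderiv_ne_zero_mem {j : Fin N} {k : ℤ} {f : MvPolynomial (Fin N × ℤ) ℝ}
    (h : pderiv (j, k) f ≠ 0) : k ∈ f.vars.image Prod.snd := by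
  by_contra hc
  apply h
  apply pderiv_eq_zero_of_not_mem_vars
  intro hv
  exact hc (Finset.mem_image_of_mem Prod.snd hv)

lemma EE_eq_of_subset {j : Fin N} {T T' : Finset ℤ} {f : MvPolynomial (Fin N × ℤ) ℝ}
    (hTT : T ⊆ T') (h0 : ∀ k ∈ T', k ∉ T → pderiv (j, k) f = 0) :
    EE j T' f = EE j T f := by
  refine (Finset.sum_subset hTT fun k hk hk' => ?_).symm
  rw [h0 k hk hk', shiftN_zero']

lemma dEulerN_eq_EE {j : Fin N} {T : Finset ℤ} {f : MvPolynomial (Fin N × ℤ) ℝ}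
    (hT : f.vars.image Prod.snd ⊆ T) : dEulerN j f = EE j T f := by
  rw [dEulerN]
  exact (EE_eq_of_subset hT fun k _ hk => by
    by_contra hc; exact hk (pderiv_ne_zero_mem hc)).symm

lemma EE_sub (j : Fin N) (T : Finset ℤ) (f g : MvPolynomial (Fin N × ℤ) ℝ) :
    EE j T (f - g) = EE j T f - EE j T g := by
  rw [EE, EE, EE, ← Finset.sum_sub_distrib]
  refine Finset.sum_congr rfl fun k _ => ?_
  rw [map_sub, shiftN_sub]

lemma EE_shift (j : Fin N) (T : Finset ℤ) (f : MvPolynomial (Fin N × ℤ) ℝ) :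
    EE j (T.image (· + 1)) (shiftN 1 f) = EE j T f := by
  rw [EE, EE, Finset.sum_image (fun a _ b _ h => by omega)]
  refine Finset.sum_congr rfl fun k _ => ?_
  rw [pderiv_shiftN 1 j k f, shiftN_shiftN]
  congr 1
  omega

lemma vars_image_shiftN (m : ℤ) (f : MvPolynomial (Fin N × ℤ) ℝ) :
    (shiftN m f).vars.image Prod.snd ⊆ (f.vars.image Prod.snd).image (· + m) := by
  intro k hk
  rw [Finset.mem_image] at hk
  obtain ⟨p, hp, rfl⟩ := hk
  obtain ⟨q, hq, rfl⟩ := mem_vars_rename _ _ hp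
  rw [Finset.mem_image]
  exact ⟨q.2, Finset.mem_image_of_mem _ hq, rfl⟩

lemma dEulerN_shift (j : Fin N) (f : MvPolynomial (Fin N × ℤ) ℝ) :
    dEulerN j (shiftN 1 f) = dEulerN j f := by
  rw [dEulerN_eq_EE (f := shiftN 1 f) (T := (f.vars.image Prod.snd).image (· + 1))
      (vars_image_shiftN 1 f), EE_shift]
  rfl

lemma dEulerN_delta (j : Fin N) (F : MvPolynomial (Fin N × ℤ) ℝ) :
    dEulerN j (deltaN F) = 0 := by
  classical
  set T := (deltaN F).vars.image Prod.snd ∪ ((shiftN 1 F).vars.image Prod.snd ∪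
      F.vars.image Prod.snd) with hT
  have h1 : dEulerN j (deltaN F) = EE j T (deltaN F) :=
    dEulerN_eq_EE (Finset.subset_union_left)
  have h2 : dEulerN j (shiftN 1 F) = EE j T (shiftN 1 F) :=
    dEulerN_eq_EE (Finset.subset_union_left.trans Finset.subset_union_right)
  have h3 : dEulerN j F = EE j T F :=
    dEulerN_eq_EE (Finset.subset_union_right.trans Finset.subset_union_right)
  rw [h1, deltaN, EE_sub, ← h2, ← h3, dEulerN_shift, sub_self]

lemma dEulerN_sub (j : Fin N) (f g : MvPolynomial (Fin N × ℤ) ℝ) :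
    dEulerN j (f - g) = dEulerN j f - dEulerN j g := by
  classical
  set T := (f - g).vars.image Prod.snd ∪ (f.vars.image Prod.snd ∪ g.vars.image Prod.snd)
  have h1 : dEulerN j (f - g) = EE j T (f - g) :=
    dEulerN_eq_EE (Finset.subset_union_left)
  have h2 : dEulerN j f = EE j T f :=
    dEulerN_eq_EE (Finset.subset_union_left.trans Finset.subset_union_right)
  have h3 : dEulerN j g = EE j T g :=
    dEulerN_eq_EE (Finset.subset_union_right.trans Finset.subset_union_right)
  rw [h1, h2, h3, EE_sub]

lemma deltaN_add (f g : MvPolynomial (Fin N × ℤ) ℝ) :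
    deltaN (f + g) = deltaN f + deltaN g := by
  rw [deltaN, deltaN, deltaN, shiftN_add]; ring

/-- Key backward induction: bounded shift, zero constant term, vanishing Euler
operators imply exactness. -/
lemma key (n : ℕ) : ∀ f : MvPolynomial (Fin N × ℤ) ℝ, constantCoeff f = 0 →
    (∀ p ∈ f.vars, 0 ≤ p.2 ∧ p.2 ≤ (n : ℤ)) → (∀ j, dEulerN j f = 0) →
    ∃ F, f = deltaN F := by
  induction n with
  | zero =>
    intro f hc hv he
    have hp : ∀ i : Fin N × ℤ, pderiv i f = 0 := by
      rintro ⟨j, k⟩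
      by_cases hk : k = 0
      · subst hk
        have h1 : dEulerN j f = EE j (f.vars.image Prod.snd ∪ {0}) f :=
          dEulerN_eq_EE Finset.subset_union_left
        have h2 : EE j (f.vars.image Prod.snd ∪ {0}) f = EE j {0} f := by
          refine EE_eq_of_subset Finset.subset_union_right fun k _ hk0 => ?_
          refine pderiv_eq_zero_of_not_mem_vars fun hmem => ?_
          obtain ⟨h01, h02⟩ := hv _ hmem
          simp only [Finset.mem_singleton] at hk0
          omega
        have h3 : EE j ({0} : Finset ℤ) f = pderiv (j, 0) f := by
          rw [EE, Finset.sum_singleton, neg_zero, shiftN_zero]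
        rw [← h3, ← h2, ← h1]
        exact he j
      · refine pderiv_eq_zero_of_not_mem_vars fun hmem => ?_
        obtain ⟨h01, h02⟩ := hv _ hmem
        simp only at h01 h02
        omega
    have hz : f = 0 := by
      ext d
      rw [coeff_zero]
      by_cases hd : d = 0
      · subst hd
        rw [← constantCoeff_eq] at *
        exact hc
      · obtain ⟨i, hi⟩ := Finsupp.ne_iff.mp hd
        rw [Finsupp.zero_apply] at hi
        have h1 : coeff (d - Finsupp.single i 1) (pderiv i f) = 0 := by
          rw [hp i, coeff_zero]
        rw [coeff_pderiv, tsub_add_cancel_of_le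
          (Finsupp.single_le_iff.mpr (by omega))] at h1
        refine (mul_eq_zero.mp h1).resolve_left ?_
        positivity
    exact ⟨0, by rw [hz, deltaN, shiftN_zero', sub_zero]⟩
  | succ n ih =>
    intro f hc hv he
    classical
    -- Step (i): the top partial derivative has only positive shifts
    have hi : ∀ j : Fin N, ∀ p ∈ (pderiv (j, (n : ℤ) + 1) f).vars, 1 ≤ p.2 := by
      intro j p hp
      set T : Finset ℤ := f.vars.image Prod.snd ∪ {(n : ℤ) + 1} with hTdef
      have hmem : (n : ℤ) + 1 ∈ T := Finset.mem_union_right _ (Finset.mem_singleton_self _)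
      have h0 : shiftN (-((n : ℤ) + 1)) (pderiv (j, (n : ℤ) + 1) f) +
          ∑ k ∈ T.erase ((n : ℤ) + 1), shiftN (-k) (pderiv (j, k) f) = 0 := by
        refine (Finset.add_sum_erase T
          (fun k => shiftN (-k) (pderiv (j, k) f)) hmem).trans ?_
        rw [← EE, ← dEulerN_eq_EE Finset.subset_union_left]
        exact he j
      have heq : pderiv (j, (n : ℤ) + 1) f =
          -∑ k ∈ T.erase ((n : ℤ) + 1), shiftN ((n : ℤ) + 1 + -k) (pderiv (j, k) f) := by
        have h1 : shiftN (-((n : ℤ) + 1)) (pderiv (j, (n : ℤ) + 1) f) =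
            -∑ k ∈ T.erase ((n : ℤ) + 1), shiftN (-k) (pderiv (j, k) f) :=
          eq_neg_of_add_eq_zero_left h0
        have h2 := congrArg (shiftN ((n : ℤ) + 1)) h1
        rw [shiftN_shiftN, neg_add_cancel, shiftN_zero] at h2
        rw [h2, shiftN_neg, shiftN_sum]
        congr 1
        refine Finset.sum_congr rfl fun k _ => ?_
        rw [shiftN_shiftN]
        congr 1
        ring
      rw [heq, vars_neg] at hp
      have hp2 := vars_sum_subset _ _ hp
      rw [Finset.mem_biUnion] at hp2
      obtain ⟨k, hk, hpk⟩ := hp2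
      obtain ⟨q, hq, rfl⟩ := mem_vars_rename _ _ hpk
      have hqf : q ∈ f.vars := vars_pderiv_subset _ _ hq
      obtain ⟨hq1, _⟩ := hv q hqf
      have hk1 : k ∈ T := Finset.mem_of_mem_erase hk
      have hk2 : k ≠ (n : ℤ) + 1 := Finset.ne_of_mem_erase hk
      have hk3 : k ≤ (n : ℤ) := by
        rcases Finset.mem_union.mp hk1 with h | h
        · obtain ⟨q', hq', rfl⟩ := Finset.mem_image.mp h
          have := (hv q' hq').2
          omega
        · simp only [Finset.mem_singleton] at h
          omega
      simp only
      omega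
    -- Step (ii): monomials containing a top-shift variable contain no shift-0 variable
    have hii : ∀ d ∈ f.support, ∀ j : Fin N, d (j, (n : ℤ) + 1) ≠ 0 →
        ∀ i : Fin N, d (i, 0) = 0 := by
      intro d hd j hdj i
      by_contra h0
      set m := d - Finsupp.single (j, ((n : ℤ) + 1)) 1 with hm
      have hmd : m + Finsupp.single (j, ((n : ℤ) + 1)) 1 = d :=
        tsub_add_cancel_of_le (Finsupp.single_le_iff.mpr (by omega))
      have hco : coeff m (pderiv (j, (n : ℤ) + 1) f) ≠ 0 := by
        rw [coeff_pderiv, hmd]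
        exact mul_ne_zero (by positivity) (MvPolynomial.mem_support_iff.mp hd)
      have hne : ((j, (n : ℤ) + 1) : Fin N × ℤ) ≠ (i, 0) := by
        simp only [ne_eq, Prod.mk.injEq, not_and]
        intro _
        omega
      have hmi : m (i, 0) = d (i, 0) := by
        rw [hm, Finsupp.tsub_apply, Finsupp.single_eq_of_ne' hne]
        omega
      have hv0 : ((i, (0 : ℤ)) : Fin N × ℤ) ∈ (pderiv (j, (n : ℤ) + 1) f).vars := by
        rw [mem_vars]
        exact ⟨m, MvPolynomial.mem_support_iff.mpr hco,
          Finsupp.mem_support_iff.mpr (by omega)⟩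
      have := hi j _ hv0
      simp only at this
      omega
    -- Step (iii): split off the top part and shift it down
    set Hi : ((Fin N × ℤ) →₀ ℕ) → Prop := fun d => ∃ j : Fin N, d (j, (n : ℤ) + 1) ≠ 0
      with hHi
    set ftop := ∑ d ∈ f.support.filter Hi, monomial d (coeff d f) with hftop
    have hcoefftop : ∀ e, coeff e ftop =
        if e ∈ f.support.filter Hi then coeff e f else 0 := by
      intro e
      rw [hftop, coeff_sum]
      simp_rw [coeff_monomial]
      exact Finset.sum_ite_eq' _ _ _
    have hvtop : ∀ p ∈ ftop.vars, 1 ≤ p.2 ∧ p.2 ≤ (n : ℤ) + 1 := by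
      intro p hp
      obtain ⟨d, hd, hpd⟩ := (mem_vars p).mp hp
      rw [MvPolynomial.mem_support_iff, hcoefftop] at hd
      have hdf : d ∈ f.support.filter Hi := by
        by_contra hcon
        rw [if_neg hcon] at hd
        exact hd rfl
      obtain ⟨hdsupp, hHid⟩ := Finset.mem_filter.mp hdf
      have hpvf : p ∈ f.vars := (mem_vars p).mpr ⟨d, hdsupp, hpd⟩
      obtain ⟨hp1, hp2⟩ := hv p hpvf
      obtain ⟨j, hj⟩ := hHid
      refine ⟨?_, hp2⟩
      by_contra hcon
      have hp0 : p.2 = 0 := by omega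
      have : d (p.1, 0) = 0 := hii d hdsupp j hj p.1
      rw [Finsupp.mem_support_iff] at hpd
      have : d p ≠ 0 := hpd
      have hpeq : p = (p.1, (0 : ℤ)) := Prod.ext rfl hp0
      rw [hpeq] at this
      omega
    set flow := f - ftop with hflow
    have hcoefflow : ∀ e, coeff e flow =
        if e ∈ f.support.filter Hi then 0 else coeff e f := by
      intro e
      rw [hflow, coeff_sub, hcoefftop]
      by_cases h : e ∈ f.support.filter Hi
      · rw [if_pos h, if_pos h, sub_self]
      · rw [if_neg h, if_neg h, sub_zero]
    have hvlow : ∀ p ∈ flow.vars, 0 ≤ p.2 ∧ p.2 ≤ (n : ℤ) := by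
      intro p hp
      obtain ⟨d, hd, hpd⟩ := (mem_vars p).mp hp
      rw [MvPolynomial.mem_support_iff, hcoefflow] at hd
      have hdnf : d ∉ f.support.filter Hi := by
        by_contra hcon
        rw [if_pos hcon] at hd
        exact hd rfl
      rw [if_neg hdnf] at hd
      have hdsupp : d ∈ f.support := MvPolynomial.mem_support_iff.mpr hd
      have hpvf : p ∈ f.vars := (mem_vars p).mpr ⟨d, hdsupp, hpd⟩
      obtain ⟨hp1, hp2⟩ := hv p hpvf
      refine ⟨hp1, ?_⟩
      by_contra hcon
      have hp0 : p.2 = (n : ℤ) + 1 := by omega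
      apply hdnf
      rw [Finset.mem_filter]
      refine ⟨hdsupp, ⟨p.1, ?_⟩⟩
      rw [Finsupp.mem_support_iff] at hpd
      have hpeq : p = (p.1, (n : ℤ) + 1) := Prod.ext rfl hp0
      rw [← hpeq]
      exact hpd
    have hctop : constantCoeff ftop = 0 := by
      rw [constantCoeff_eq]
      rw [hcoefftop]
      rw [if_neg]
      intro hcon
      obtain ⟨_, j, hj⟩ := Finset.mem_filter.mp hcon
      exact hj rfl
    set G := shiftN (-1) ftop with hG
    have hdg : deltaN G = ftop - G := by
      rw [deltaN, hG, shiftN_shiftN]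
      norm_num [shiftN_zero]
    set f' := flow + G with hf'def
    have hf' : f' = f - deltaN G := by
      rw [hf'def, hdg, hflow]
      ring
    have hcf' : constantCoeff f' = 0 := by
      rw [hf'def, map_add]
      have h1 : constantCoeff G = constantCoeff ftop := constantCoeff_rename _ ftop
      have h2 : constantCoeff flow = 0 := by
        rw [hflow, map_sub, hc, hctop, sub_zero]
      rw [h1, h2, hctop, add_zero]
    have hvf' : ∀ p ∈ f'.vars, 0 ≤ p.2 ∧ p.2 ≤ (n : ℤ) := by
      intro p hp
      rcases Finset.mem_union.mp (vars_add_subset _ _ hp) with h | h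
      · exact hvlow p h
      · obtain ⟨q, hq, rfl⟩ := mem_vars_rename _ _ h
        obtain ⟨hq1, hq2⟩ := hvtop q hq
        simp only
        omega
    have hef' : ∀ j, dEulerN j f' = 0 := by
      intro j
      rw [hf', dEulerN_sub, dEulerN_delta, sub_zero, he j]
    obtain ⟨F', hF'⟩ := ih f' hcf' hvf' hef'
    refine ⟨F' + G, ?_⟩
    have hfeq : f = f' + deltaN G := by
      rw [hf']
      ring
    rw [hfeq, hF', deltaN_add]

end DiscreteExactAux

/-- Discrete exactness criterion (multicomponent): a polynomial with zero
constant term involving only nonnegative shifts is a total difference if and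
only if all its discrete Euler operators vanish. -/
theorem discrete_exactness_criterion {N : ℕ} (f : MvPolynomial (Fin N × ℤ) ℝ)
    (hf : constantCoeff f = 0) (hpos : ∀ p ∈ f.vars, 0 ≤ p.2) :
    (∃ F : MvPolynomial (Fin N × ℤ) ℝ, f = deltaN F) ↔
      ∀ j : Fin N, dEulerN j f = 0 := by
  constructor
  · rintro ⟨F, rfl⟩ j
    exact DiscreteExactAux.dEulerN_delta j F
  · intro h
    refine DiscreteExactAux.key ((f.vars.image Prod.snd).sup Int.toNat) f hf
      (fun p hp => ⟨hpos p hp, ?_⟩) h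
    calc p.2 ≤ (p.2.toNat : ℤ) := Int.self_le_toNat _
      _ ≤ _ := by
          exact_mod_cast Nat.cast_le.mpr
            (Finset.le_sup (f := Int.toNat) (Finset.mem_image_of_mem Prod.snd hp))
end

section
/- Equality of the two forms of the discrete homotopy integrand: for every f ∈ S = MvPolynomial ℤ ℝ with only nonnegative shifts of order at most M, Σ_{i=0}^{M−1} Δ^i ( X₀ · L⁽ⁱ⁺¹⁾ f ) = Σ_{i=0}^{M−1} Xᵢ · Σ_{k=i+1}^{M} D^{−(k−i)} (∂f/∂X_k). -/
open MvPolynomial Finset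


/-- The discrete higher Euler operators
`L⁽ⁱ⁾ f = Σ_{k=i}^{M} C(k,i) · D^{−k} (∂f/∂X_k)`
for `f` with only nonnegative shifts of order at most `M`. -/
noncomputable def dHigherEuler (M i : ℕ) (f : MvPolynomial ℤ ℝ) :
    MvPolynomial ℤ ℝ :=
  ∑ k ∈ Finset.Icc i M, (k.choose i : ℝ) • shift (-(k : ℤ)) (pderiv (k : ℤ) f)


abbrev S' := MvPolynomial ℤ ℝ

lemma shift_shift_s14 (m n : ℤ) (f : S') : shift m (shift n f) = shift (n + m) f := by
  unfold shift
  rw [rename_rename]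
  have : ((fun k : ℤ => k + m) ∘ fun k : ℤ => k + n) = fun k : ℤ => k + (n + m) := by
    funext k; simp [Function.comp]; ring
  rw [this]

lemma shift_X (m k : ℤ) : shift m (X k : S') = X (k + m) := rename_X _ _

lemma shift_mul (m : ℤ) (a b : S') : shift m (a * b) = shift m a * shift m b := map_mul _ _ _

lemma shift_smul (m : ℤ) (r : ℝ) (a : S') : shift m (r • a) = r • shift m a := by
  unfold shift; exact map_smul (rename _) r a

lemma shift_sum {α} (m : ℤ) (s : Finset α) (g : α → S') :
    shift m (∑ x ∈ s, g x) = ∑ x ∈ s, shift m (g x) := map_sum _ _ _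

lemma shift_zero' (f : S') : shift 0 f = f := by
  unfold shift
  have : (fun k : ℤ => k + 0) = id := by funext k; simp
  rw [this, rename_id, AlgHom.id_apply]

noncomputable def Dop : Module.End ℝ S' :=
  (rename (fun k : ℤ => k + 1) : S' →ₐ[ℝ] S').toLinearMap

lemma Dop_apply (g : S') : Dop g = shift 1 g := rfl

lemma Dop_pow_apply (j : ℕ) (g : S') : (Dop ^ j) g = shift j g := by
  induction j with
  | zero => simp [shift_zero']
  | succ j ih =>
    rw [pow_succ', Module.End.mul_apply, ih, Dop_apply, shift_shift_s14]
    norm_cast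

lemma delta_iterate (i : ℕ) (g : S') : delta^[i] g = ((Dop - 1) ^ i) g := by
  induction i generalizing g with
  | zero => simp
  | succ i ih =>
    rw [Function.iterate_succ_apply, ih, pow_succ, Module.End.mul_apply]
    congr 1

lemma delta_iter_sum (i : ℕ) (g : S') :
    delta^[i] g = ∑ j ∈ range (i + 1), ((-1:ℝ)^(i-j) * (i.choose j)) • shift j g := by
  rw [delta_iterate]
  have hc : Commute Dop (-1 : Module.End ℝ S') := (Commute.one_right Dop).neg_right
  have h1 : Dop - 1 = Dop + (-1) := by rw [sub_eq_add_neg]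
  rw [h1, hc.add_pow, LinearMap.sum_apply]
  refine Finset.sum_congr rfl fun j _ => ?_
  rw [Module.End.mul_apply, Module.End.mul_apply, Module.End.natCast_apply]
  have hneg : ((-1 : Module.End ℝ S') ^ (i - j)) (((i.choose j) : ℕ) • g)
      = ((-1:ℝ)^(i-j) * (i.choose j)) • g := by
    have : (-1 : Module.End ℝ S') = algebraMap ℝ _ (-1) := by
      rw [map_neg, map_one]
    rw [this, ← map_pow, Module.algebraMap_end_apply, ← Nat.cast_smul_eq_nsmul (R := ℝ), smul_smul]
  rw [hneg, map_smul, Dop_pow_apply]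


lemma stepA (M i : ℕ) (f : S') :
    delta^[i] (X (0:ℤ) * dHigherEuler M (i+1) f)
      = ∑ j ∈ range (i+1), ∑ k ∈ Icc (i+1) M,
          ((-1:ℝ)^(i-j) * (i.choose j) * (k.choose (i+1))) •
            (X (j:ℤ) * shift ((j:ℤ) - (k:ℤ)) (pderiv (k:ℤ) f)) := by
  rw [delta_iter_sum]
  refine sum_congr rfl fun j _ => ?_
  rw [dHigherEuler, shift_mul, shift_X, shift_sum, zero_add, Finset.mul_sum, Finset.smul_sum]
  refine sum_congr rfl fun k _ => ?_
  rw [shift_smul, shift_shift_s14, mul_smul_comm, smul_smul,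
    show (-(k:ℤ) + (j:ℤ)) = (j:ℤ) - (k:ℤ) by ring]

lemma vanish (j k : ℕ) (h : j < k) :
    ∑ i ∈ Icc j k, (-1:ℤ)^(i-j) * (i.choose j) * (k.choose i) = 0 := by
  have hre : ∀ i ∈ Icc j k, (-1:ℤ)^(i-j) * (i.choose j) * (k.choose i)
      = (k.choose j) * ((-1:ℤ)^(i-j) * ((k-j).choose (i-j))) := by
    intro i hi
    simp only [mem_Icc] at hi
    have := Nat.choose_mul (n := k) (k := i) (s := j) hi.1
    have h2 : ((k.choose i) * (i.choose j) : ℤ) = (k.choose j) * ((k-j).choose (i-j)) := by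
      exact_mod_cast congrArg (Nat.cast (R := ℤ)) this
    linear_combination ((-1:ℤ)^(i-j)) * h2
  rw [Finset.sum_congr rfl hre, ← Finset.mul_sum]
  have hkj : k - j ≠ 0 := by omega
  have : ∑ i ∈ Icc j k, (-1:ℤ)^(i-j) * ((k-j).choose (i-j))
      = ∑ t ∈ range (k - j + 1), (-1:ℤ)^t * ((k-j).choose t) := by
    rw [← Finset.Ico_add_one_right_eq_Icc, Finset.sum_Ico_eq_sum_range]
    have h1 : k + 1 - j = k - j + 1 := by omega
    rw [h1]
    exact Finset.sum_congr rfl (fun t _ => by rw [Nat.add_sub_cancel_left])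
  rw [this, Int.alternating_sum_range_choose, if_neg hkj, mul_zero]

lemma key (j k : ℕ) (h : j < k) :
    ∑ i ∈ Icc j (k-1), (-1:ℤ)^(i-j) * (i.choose j) * (k.choose (i+1)) = 1 := by
  induction k with
  | zero => omega
  | succ k ih =>
    rcases Nat.lt_or_ge j k with hk | hk
    · -- j < k, use ih
      have hercc : Icc j (k+1-1) = Icc j k := by norm_num
      rw [hercc]
      have split : ∀ i ∈ Icc j k, (-1:ℤ)^(i-j) * (i.choose j) * ((k+1).choose (i+1))
          = (-1:ℤ)^(i-j) * (i.choose j) * (k.choose (i+1))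
            + (-1:ℤ)^(i-j) * (i.choose j) * (k.choose i) := by
        intro i _
        rw [Nat.choose_succ_succ]
        push_cast
        ring
      rw [Finset.sum_congr rfl split, Finset.sum_add_distrib, vanish j k hk, add_zero]
      have : ∑ i ∈ Icc j k, (-1:ℤ)^(i-j) * (i.choose j) * (k.choose (i+1))
          = ∑ i ∈ Icc j (k-1), (-1:ℤ)^(i-j) * (i.choose j) * (k.choose (i+1)) := by
        have : Icc j k = insert k (Icc j (k-1)) := by
          ext x; simp [mem_Icc, mem_insert]; omega
        rw [this, Finset.sum_insert (by simp [mem_Icc]; omega)]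
        rw [Nat.choose_succ_self, Nat.cast_zero, mul_zero, zero_add]
      rw [this, ih hk]
    · -- j = k
      have hj : j = k := by omega
      subst hj
      simp

lemma keyR (j k : ℕ) (h : j < k) :
    ∑ i ∈ Icc j (k-1), (-1:ℝ)^(i-j) * (i.choose j) * (k.choose (i+1)) = 1 := by
  have h2 := congrArg (Int.cast : ℤ → ℝ) (key j k h)
  push_cast at h2
  exact h2

/-- Equality of the two forms of the discrete homotopy integrand:
`Σ_{i=0}^{M−1} Δ^i (X₀ · L⁽ⁱ⁺¹⁾ f) = Σ_{i=0}^{M−1} Xᵢ · Σ_{k=i+1}^{M} D^{−(k−i)} (∂f/∂X_k)`. -/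
theorem discrete_integrand_forms_equal (M : ℕ) (f : MvPolynomial ℤ ℝ)
    (hM : ∀ v ∈ f.vars, 0 ≤ v ∧ v ≤ (M : ℤ)) :
    ∑ i ∈ Finset.range M, (delta^[i]) (X (0 : ℤ) * dHigherEuler M (i + 1) f)
      = ∑ i ∈ Finset.range M,
          X (i : ℤ) * ∑ k ∈ Finset.Icc (i + 1) M,
            shift (-((k : ℤ) - (i : ℤ))) (pderiv (k : ℤ) f) := by
  classical
  calc
    ∑ i ∈ Finset.range M, (delta^[i]) (X (0 : ℤ) * dHigherEuler M (i + 1) f)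
        = ∑ i ∈ range M, ∑ j ∈ range (i+1), ∑ k ∈ Icc (i+1) M,
            ((-1:ℝ)^(i-j) * (i.choose j) * (k.choose (i+1))) •
              (X (j:ℤ) * shift ((j:ℤ) - (k:ℤ)) (pderiv (k:ℤ) f)) :=
      sum_congr rfl fun i _ => stepA M i f
    _ = ∑ i ∈ range M, ∑ j ∈ range M, ∑ k ∈ Icc 1 M,
          (if j ≤ i ∧ i < k then
            ((-1:ℝ)^(i-j) * (i.choose j) * (k.choose (i+1))) •
              (X (j:ℤ) * shift ((j:ℤ) - (k:ℤ)) (pderiv (k:ℤ) f)) else 0) := by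
      refine sum_congr rfl fun i hi => ?_
      rw [mem_range] at hi
      have hj : range (i+1) = (range M).filter (fun j => j ≤ i) := by
        ext x; simp [mem_filter]; omega
      have hk : Icc (i+1) M = (Icc 1 M).filter (fun k => i < k) := by
        ext x; simp [mem_filter]; omega
      rw [hj, sum_filter]
      refine sum_congr rfl fun j _ => ?_
      rw [hk, sum_filter]
      by_cases hji : j ≤ i
      · simp only [if_pos hji]
        refine sum_congr rfl fun k _ => ?_
        by_cases hik : i < k
        · rw [if_pos hik, if_pos ⟨hji, hik⟩]
        · rw [if_neg hik, if_neg (by tauto)]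
      · simp only [if_neg hji]
        rw [eq_comm, Finset.sum_eq_zero]
        intro k _
        rw [if_neg (by tauto)]
    _ = ∑ j ∈ range M, ∑ k ∈ Icc 1 M, ∑ i ∈ range M,
          (if j ≤ i ∧ i < k then
            ((-1:ℝ)^(i-j) * (i.choose j) * (k.choose (i+1))) •
              (X (j:ℤ) * shift ((j:ℤ) - (k:ℤ)) (pderiv (k:ℤ) f)) else 0) := by
      rw [Finset.sum_comm]
      exact sum_congr rfl fun j _ => Finset.sum_comm
    _ = ∑ j ∈ range M, ∑ k ∈ Icc 1 M,
          (if j < k then X (j:ℤ) * shift ((j:ℤ) - (k:ℤ)) (pderiv (k:ℤ) f) else 0) := by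
      refine sum_congr rfl fun j hj => sum_congr rfl fun k hk => ?_
      rw [mem_range] at hj
      rw [mem_Icc] at hk
      by_cases hjk : j < k
      · rw [if_pos hjk]
        have hfil : (range M).filter (fun i => j ≤ i ∧ i < k) = Icc j (k-1) := by
          ext x; simp [mem_filter]; omega
        rw [← sum_filter, hfil, ← Finset.sum_smul, keyR j k hjk, one_smul]
      · rw [if_neg hjk]
        refine Finset.sum_eq_zero fun i _ => ?_
        rw [if_neg (by omega)]
    _ = ∑ i ∈ Finset.range M,
          X (i : ℤ) * ∑ k ∈ Finset.Icc (i + 1) M,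
            shift (-((k : ℤ) - (i : ℤ))) (pderiv (k : ℤ) f) := by
      refine sum_congr rfl fun j hj => ?_
      rw [Finset.mul_sum]
      have hfil : (Icc 1 M).filter (fun k => j < k) = Icc (j+1) M := by
        ext x; simp [mem_filter]; omega
      rw [← sum_filter, hfil]
      refine sum_congr rfl fun k _ => ?_
      rw [show (-((k:ℤ) - (j:ℤ))) = (j:ℤ) - (k:ℤ) by ring]
end
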